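/- For the super-operator Φ(X) = ½|0⟩⟨0|X|0⟩⟨0| + (i/2)|0⟩⟨1|X|1⟩⟨0| on L(C²), one has ‖Φ‖_{∞→p} = 1 while ‖Φ‖^H_{∞→p} = 1/√2 for every p ∈ [1, ∞]. -/

import Mathlib

/-!
Both terms of `Φ` factor through `|0⟩⟨0|`, so `Φ X = c(X) • |0⟩⟨0|` with
`c(X) = (X₀₀ + i X₁₁) / 2` (`phiCoeff`). A rank-one matrix has a single nonzero singular value,
so all its Schatten norms equal its Frobenius norm, and `‖Φ X‖_p = |c(X)|`.

Every entry of `X` is bounded by its largest singular value, since the diagonal of `Xᴴ X` is a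
convex combination of the eigenvalues of `Xᴴ X`. Hence `|c(X)| ≤ ‖X‖_∞`, with equality at the
unitary `diag(1, -i)`, whose phase `-i` cancels the factor `i`. For Hermitian `X` the diagonal
entries are real, so `|c(X)| = √(X₀₀² + X₁₁²) / 2 ≤ ‖X‖_∞ / √2`, with equality at `X = 1`.
-/

open scoped ENNReal
open Matrix
open scoped ComplexOrder

noncomputable section

namespace SchattenNotes

/-- The vector of singular values of a matrix. -/
def singVal {m n : Type*} [Fintype m] [Fintype n] [DecidableEq n]
    (X : Matrix m n ℂ) (i : n) : ℝ :=
  Real.sqrt (((Matrix.posSemidef_conjTranspose_mul_self X).1).eigenvalues i)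

/-- The Schatten `p`-norm, for `p ∈ [1, ∞]` encoded as `p : ℝ≥0∞`. -/
def schatten {m n : Type*} [Fintype m] [Fintype n] [DecidableEq n]
    (p : ℝ≥0∞) (X : Matrix m n ℂ) : ℝ :=
  if p = ∞ then ⨆ i, singVal X i
  else (∑ i, singVal X i ^ p.toReal) ^ (1 / p.toReal)

/-- The induced `q → p` super-operator norm. -/
def opNorm {m n : Type*} [Fintype m] [Fintype n] [DecidableEq m] [DecidableEq n]
    (q p : ℝ≥0∞) (Φ : Matrix n n ℂ →ₗ[ℂ] Matrix m m ℂ) : ℝ :=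
  ⨆ X : {X : Matrix n n ℂ // X ≠ 0}, schatten p (Φ X.1) / schatten q X.1

/-- The induced `q → p` super-operator norm restricted to Hermitian inputs. -/
def opNormH {m n : Type*} [Fintype m] [Fintype n] [DecidableEq m] [DecidableEq n]
    (q p : ℝ≥0∞) (Φ : Matrix n n ℂ →ₗ[ℂ] Matrix m m ℂ) : ℝ :=
  ⨆ X : {X : Matrix n n ℂ // X.IsHermitian ∧ X ≠ 0}, schatten p (Φ X.1) / schatten q X.1

/-- The super-operator `Φ ⊗ I_{L(H)}`, where `H` has orthonormal basis indexed by `k`. -/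
def tensorId {m n : Type*} [Fintype m] [Fintype n] (k : Type*) [Fintype k]
    (Φ : Matrix n n ℂ →ₗ[ℂ] Matrix m m ℂ) :
    Matrix (n × k) (n × k) ℂ →ₗ[ℂ] Matrix (m × k) (m × k) ℂ where
  toFun X := fun r s => Φ (fun i j => X (i, r.2) (j, s.2)) r.1 s.1
  map_add' X Y := by
    funext r s
    show Φ ((fun i j => X (i, r.2) (j, s.2)) + fun i j => Y (i, r.2) (j, s.2)) r.1 s.1 = _
    exact congrFun (congrFun (_root_.map_add Φ (Matrix.of fun i j => X (i, r.2) (j, s.2)) (Matrix.of fun i j => Y (i, r.2) (j, s.2))) r.1) s.1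
  map_smul' c X := by
    funext r s
    show Φ (c • fun i j => X (i, r.2) (j, s.2)) r.1 s.1 = _
    exact congrFun (congrFun (_root_.map_smul Φ c (Matrix.of fun i j => X (i, r.2) (j, s.2))) r.1) s.1

/-- Complete positivity of a super-operator. -/
def IsCP {m n : Type*} [Fintype m] [Fintype n]
    (Φ : Matrix n n ℂ →ₗ[ℂ] Matrix m m ℂ) : Prop :=
  ∀ (k : ℕ) (X : Matrix (n × Fin k) (n × Fin k) ℂ),
    X.PosSemidef → (tensorId (Fin k) Φ X).PosSemidef

/-- Trace preservation of a super-operator. -/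
def IsTP {m n : Type*} [Fintype m] [Fintype n]
    (Φ : Matrix n n ℂ →ₗ[ℂ] Matrix m m ℂ) : Prop :=
  ∀ X : Matrix n n ℂ, (Φ X).trace = X.trace

/-- The rank-one operator `|u⟩⟨v|`. -/
def outer {m n : Type*} (u : m → ℂ) (v : n → ℂ) : Matrix m n ℂ :=
  Matrix.vecMulVec u (star v)

/-- The quadratic form `⟨a|X|a⟩`. -/
def sand {n : Type*} [Fintype n] (a : n → ℂ) (X : Matrix n n ℂ) : ℂ :=
  star a ⬝ᵥ X *ᵥ a

/-- A unit vector. -/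
def IsUnit' {n : Type*} [Fintype n] (u : n → ℂ) : Prop := star u ⬝ᵥ u = 1


def ket0 : Fin 2 → ℂ := ![1, 0]
def ket1 : Fin 2 → ℂ := ![0, 1]

lemma ciSup_eq_of_forall_le_of_apply_eq {α ι : Type*} [ConditionallyCompleteLattice α]
    {f : ι → α} {c : α} (hf : ∀ i, f i ≤ c) (i₀ : ι) (h : f i₀ = c) : ⨆ i, f i = c :=
  IsGreatest.csSup_eq ⟨⟨i₀, h⟩, Set.forall_mem_range.2 hf⟩

lemma _root_.Matrix.IsHermitian.re_apply_self_le_of_eigenvalues_le {n : Type*} [Fintype n]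
    [DecidableEq n] {A : Matrix n n ℂ} (hA : A.IsHermitian) {c : ℝ}
    (hc : ∀ k, hA.eigenvalues k ≤ c) (j : n) : (A j j).re ≤ c := by
  set U : Matrix n n ℂ := (hA.eigenvectorUnitary : Matrix n n ℂ)
  have hU : ∑ k, ‖U j k‖ ^ 2 = 1 := by
    have h := congrFun (congrFun (Unitary.coe_mul_star_self hA.eigenvectorUnitary) j) j
    simp only [mul_apply, Unitary.coe_star, star_apply, one_apply_eq, RCLike.star_def,
      Complex.mul_conj, Complex.normSq_eq_norm_sq] at h
    exact_mod_cast h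
  have hA_jj : (A j j).re = ∑ k, hA.eigenvalues k * ‖U j k‖ ^ 2 := by
    conv_lhs => rw [hA.spectral_theorem]
    simp only [Unitary.conjStarAlgAut_apply, mul_apply, diagonal_apply, star_apply,
      Function.comp_apply, mul_ite, mul_zero, Finset.sum_ite_eq', Finset.mem_univ, if_true]
    rw [Complex.re_sum]
    refine Finset.sum_congr rfl fun k _ => ?_
    rw [mul_right_comm, RCLike.star_def, Complex.mul_conj, Complex.normSq_eq_norm_sq]
    change (((‖U j k‖ ^ 2 : ℝ) : ℂ) * ((hA.eigenvalues k : ℝ) : ℂ)).re = _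
    rw [← Complex.ofReal_mul, Complex.ofReal_re, mul_comm]
  calc (A j j).re = ∑ k, hA.eigenvalues k * ‖U j k‖ ^ 2 := hA_jj
    _ ≤ ∑ k, c * ‖U j k‖ ^ 2 := by gcongr with k; exact hc k
    _ = c := by rw [← Finset.mul_sum, hU, mul_one]

section SingularValues

variable {m n : Type*} [Fintype m]

lemma re_conjTranspose_mul_self_apply_self (X : Matrix m n ℂ) (j : n) :
    ((Xᴴ * X) j j).re = ∑ i, ‖X i j‖ ^ 2 := by
  simp only [mul_apply, conjTranspose_apply, RCLike.star_def, Complex.conj_mul', Complex.re_sum,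
    ← Complex.ofReal_pow, Complex.ofReal_re]

variable [Fintype n] [DecidableEq n]

lemma singVal_nonneg (X : Matrix m n ℂ) (k : n) : 0 ≤ singVal X k :=
  Real.sqrt_nonneg _

lemma schatten_top_nonneg (X : Matrix m n ℂ) : 0 ≤ schatten ∞ X := by
  rw [schatten, if_pos rfl]
  exact Real.iSup_nonneg (singVal_nonneg X)

lemma norm_apply_le_schatten_top (X : Matrix m n ℂ) (i : m) (j : n) :
    ‖X i j‖ ≤ schatten ∞ X := by
  have hA := (posSemidef_conjTranspose_mul_self X).1
  have : Nonempty n := ⟨j⟩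
  obtain ⟨k, hk⟩ := Finite.exists_max hA.eigenvalues
  have h : ‖X i j‖ ^ 2 ≤ hA.eigenvalues k := calc
    ‖X i j‖ ^ 2 ≤ ∑ i', ‖X i' j‖ ^ 2 :=
      Finset.single_le_sum (f := fun i' => ‖X i' j‖ ^ 2) (fun _ _ => by positivity)
        (Finset.mem_univ i)
    _ = ((Xᴴ * X) j j).re := (re_conjTranspose_mul_self_apply_self X j).symm
    _ ≤ _ := hA.re_apply_self_le_of_eigenvalues_le hk j
  calc ‖X i j‖ ≤ singVal X k := Real.le_sqrt_of_sq_le h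
    _ ≤ schatten ∞ X := by
      rw [schatten, if_pos rfl]
      exact le_ciSup (Set.finite_range _).bddAbove k

lemma sum_sq_singVal (X : Matrix m n ℂ) :
    ∑ k, singVal X k ^ 2 = ∑ i, ∑ j, ‖X i j‖ ^ 2 := by
  have hA := posSemidef_conjTranspose_mul_self X
  have htr := congrArg Complex.re hA.1.trace_eq_sum_eigenvalues
  simp only [Complex.re_sum, Complex.coe_algebraMap, Complex.ofReal_re, trace, diag_apply,
    re_conjTranspose_mul_self_apply_self] at htr
  simp only [singVal, Real.sq_sqrt (hA.eigenvalues_nonneg _), ← htr]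
  exact Finset.sum_comm

lemma schatten_eq_singVal_of_forall_ne {p : ℝ≥0∞} (hp : p ≠ 0) {X : Matrix m n ℂ} {k : n}
    (hk : ∀ i ≠ k, singVal X i = 0) : schatten p X = singVal X k := by
  by_cases hp_top : p = ∞
  · have : Nonempty n := ⟨k⟩
    rw [schatten, if_pos hp_top]
    refine le_antisymm (ciSup_le fun i => ?_) (le_ciSup (Set.finite_range _).bddAbove k)
    rcases eq_or_ne i k with rfl | hi
    · exact le_rfl
    · rw [hk i hi]; exact singVal_nonneg X k
  · have hr : p.toReal ≠ 0 := ENNReal.toReal_ne_zero.mpr ⟨hp, hp_top⟩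
    rw [schatten, if_neg hp_top,
      Finset.sum_eq_single k (fun i _ hi => by rw [hk i hi, Real.zero_rpow hr]) (by simp),
      one_div, Real.rpow_rpow_inv (singVal_nonneg X k) hr]

lemma exists_forall_ne_singVal_eq_zero [Nonempty n] {X : Matrix m n ℂ} (hX : X.rank ≤ 1) :
    ∃ k, ∀ i ≠ k, singVal X i = 0 := by
  have hA := (posSemidef_conjTranspose_mul_self X).1
  have hcard : Fintype.card {i // hA.eigenvalues i ≠ 0} ≤ 1 := by
    rwa [← hA.rank_eq_card_non_zero_eigs, rank_conjTranspose_mul_self]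
  suffices ∃ k, ∀ i ≠ k, hA.eigenvalues i = 0 by
    obtain ⟨k, hk⟩ := this
    exact ⟨k, fun i hi => by rw [singVal, hk i hi, Real.sqrt_zero]⟩
  by_cases h : ∃ k, hA.eigenvalues k ≠ 0
  · obtain ⟨k, hk⟩ := h
    refine ⟨k, fun i hi => by_contra fun hne => hi ?_⟩
    exact congrArg Subtype.val (Fintype.card_le_one_iff.mp hcard ⟨i, hne⟩ ⟨k, hk⟩)
  · push Not at h
    exact ⟨Classical.arbitrary n, fun i _ => h i⟩

lemma schatten_eq_sqrt_of_rank_le_one [Nonempty n] {p : ℝ≥0∞} (hp : p ≠ 0) {X : Matrix m n ℂ}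
    (hX : X.rank ≤ 1) : schatten p X = √(∑ i, ∑ j, ‖X i j‖ ^ 2) := by
  obtain ⟨k, hk⟩ := exists_forall_ne_singVal_eq_zero hX
  rw [schatten_eq_singVal_of_forall_ne hp hk, ← sum_sq_singVal,
    Finset.sum_eq_single k (fun i _ hi => by rw [hk i hi, zero_pow two_ne_zero]) (by simp),
    Real.sqrt_sq (singVal_nonneg X k)]

lemma schatten_top_eq_one_of_conjTranspose_mul_self_eq_one [Nonempty n] {X : Matrix m n ℂ}
    (hX : Xᴴ * X = 1) : schatten ∞ X = 1 := by
  have hA := (posSemidef_conjTranspose_mul_self X).1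
  have h_eig : ∀ k, hA.eigenvalues k = 1 := fun k => by
    set b := hA.eigenvectorBasis k
    have hb : (Xᴴ * X) *ᵥ ⇑b = ⇑b := by rw [hX, one_mulVec]
    rw [hA.eigenvalues_eq, hb, dotProduct_comm, ← EuclideanSpace.inner_eq_star_dotProduct,
      inner_self_eq_norm_sq_to_K, hA.eigenvectorBasis.orthonormal.1 k]
    simp
  rw [schatten, if_pos rfl]
  simp only [singVal, h_eig, Real.sqrt_one, ciSup_const]

end SingularValues

lemma outer_mul_mul_outer {k l o q : Type*} [Fintype l] [Fintype o] (u : k → ℂ) (v : l → ℂ)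
    (X : Matrix l o ℂ) (w : o → ℂ) (z : q → ℂ) :
    outer u v * X * outer w z = (star v ⬝ᵥ X *ᵥ w) • outer u z := by
  rw [outer, outer, outer, Matrix.mul_assoc, mul_vecMulVec, vecMulVec_mul_vecMulVec,
    vecMulVec_smul]

def phiCoeff (X : Matrix (Fin 2) (Fin 2) ℂ) : ℂ := X 0 0 / 2 + Complex.I / 2 * X 1 1

lemma apply_eq_smul_outer {Φ : Matrix (Fin 2) (Fin 2) ℂ →ₗ[ℂ] Matrix (Fin 2) (Fin 2) ℂ}
    (hΦ : ∀ X, Φ X = (1 / 2 : ℂ) • (outer ket0 ket0 * X * outer ket0 ket0)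
      + (Complex.I / 2) • (outer ket0 ket1 * X * outer ket1 ket0))
    (X : Matrix (Fin 2) (Fin 2) ℂ) : Φ X = phiCoeff X • outer ket0 ket0 := by
  have h0 : star ket0 ⬝ᵥ X *ᵥ ket0 = X 0 0 := by simp [ket0, dotProduct, mulVec, Fin.sum_univ_two]
  have h1 : star ket1 ⬝ᵥ X *ᵥ ket1 = X 1 1 := by simp [ket1, dotProduct, mulVec, Fin.sum_univ_two]
  rw [hΦ, outer_mul_mul_outer, outer_mul_mul_outer, h0, h1, smul_smul, smul_smul, ← add_smul,
    phiCoeff]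
  ring_nf

lemma schatten_smul_outer_ket0 {p : ℝ≥0∞} (hp : p ≠ 0) (c : ℂ) :
    schatten p (c • outer ket0 ket0) = ‖c‖ := by
  have h_rank : (c • outer ket0 ket0).rank ≤ 1 := by
    rw [outer, ← smul_vecMulVec]; exact rank_vecMulVec_le _ _
  rw [schatten_eq_sqrt_of_rank_le_one hp h_rank]
  simp [outer, ket0, vecMulVec_apply, Fin.sum_univ_two, -cons_vecMulVec, -vecMulVec_cons]

lemma norm_phiCoeff_le_schatten_top (X : Matrix (Fin 2) (Fin 2) ℂ) :
    ‖phiCoeff X‖ ≤ schatten ∞ X := by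
  have h0 := norm_apply_le_schatten_top X 0 0
  have h1 := norm_apply_le_schatten_top X 1 1
  calc ‖phiCoeff X‖ ≤ ‖X 0 0‖ / 2 + ‖X 1 1‖ / 2 := by
        refine (norm_add_le _ _).trans_eq ?_
        rw [norm_div, norm_mul, norm_div, Complex.norm_I, Complex.norm_two]
        ring
    _ ≤ schatten ∞ X := by linarith

lemma norm_phiCoeff_le_of_isHermitian {X : Matrix (Fin 2) (Fin 2) ℂ} (hX : X.IsHermitian) :
    ‖phiCoeff X‖ ≤ 1 / √2 * schatten ∞ X := by
  set D := schatten ∞ X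
  set r := (X 0 0).re
  set s := (X 1 1).re
  have hr_coe : (r : ℂ) = X 0 0 := hX.coe_re_apply_self 0
  have hs_coe : (s : ℂ) = X 1 1 := hX.coe_re_apply_self 1
  have hr : |r| ≤ D := by
    rw [← Real.norm_eq_abs, ← Complex.norm_real, hr_coe]; exact norm_apply_le_schatten_top X 0 0
  have hs : |s| ≤ D := by
    rw [← Real.norm_eq_abs, ← Complex.norm_real, hs_coe]; exact norm_apply_le_schatten_top X 1 1
  have hz : phiCoeff X = ((r / 2 : ℝ) : ℂ) + ((s / 2 : ℝ) : ℂ) * Complex.I := by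
    rw [phiCoeff, ← hr_coe, ← hs_coe]; push_cast; ring
  calc ‖phiCoeff X‖ = √((r / 2) ^ 2 + (s / 2) ^ 2) := by rw [hz, Complex.norm_add_mul_I]
    _ ≤ √(D ^ 2 / 2) := by
        gcongr
        nlinarith [sq_abs r, sq_abs s, pow_le_pow_left₀ (abs_nonneg r) hr 2,
          pow_le_pow_left₀ (abs_nonneg s) hs 2]
    _ = 1 / √2 * D := by
        rw [Real.sqrt_div' _ zero_le_two, Real.sqrt_sq (schatten_top_nonneg X), one_div_mul_eq_div]

lemma phiCoeff_diagonal_one_neg_I : phiCoeff (diagonal ![1, -Complex.I]) = 1 := by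
  simp only [phiCoeff, diagonal_apply_eq, cons_val_zero, cons_val_one]
  linear_combination (-1 / 2 : ℂ) * Complex.I_sq

lemma norm_phiCoeff_one : ‖phiCoeff 1‖ = 1 / √2 := by
  rw [phiCoeff, one_apply_eq, one_apply_eq, mul_one, show (1 : ℂ) / 2 + Complex.I / 2
      = ((1 / 2 : ℝ) : ℂ) + ((1 / 2 : ℝ) : ℂ) * Complex.I by push_cast; ring,
    Complex.norm_add_mul_I, show (1 / 2 : ℝ) ^ 2 + (1 / 2) ^ 2 = 1 / 2 by norm_num,
    Real.sqrt_div' _ zero_le_two, Real.sqrt_one]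

/-- For `Φ(X) = ½|0⟩⟨0|X|0⟩⟨0| + (i/2)|0⟩⟨1|X|1⟩⟨0|`, one has `‖Φ‖_{∞→p} = 1` while
`‖Φ‖^H_{∞→p} = 1/√2` for every `p ∈ [1,∞]`. -/
theorem stmt13 (Φ : Matrix (Fin 2) (Fin 2) ℂ →ₗ[ℂ] Matrix (Fin 2) (Fin 2) ℂ)
    (hΦ : ∀ X, Φ X = (1 / 2 : ℂ) • (outer ket0 ket0 * X * outer ket0 ket0)
      + (Complex.I / 2) • (outer ket0 ket1 * X * outer ket1 ket0))
    (p : ℝ≥0∞) (hp : 1 ≤ p) :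
    opNorm ∞ p Φ = 1 ∧ opNormH ∞ p Φ = 1 / Real.sqrt 2 := by
  have h_ratio (X : Matrix (Fin 2) (Fin 2) ℂ) :
      schatten p (Φ X) / schatten ∞ X = ‖phiCoeff X‖ / schatten ∞ X := by
    rw [apply_eq_smul_outer hΦ, schatten_smul_outer_ket0 (zero_lt_one.trans_le hp).ne']
  set U : Matrix (Fin 2) (Fin 2) ℂ := diagonal ![1, -Complex.I]
  have hU : Uᴴ * U = 1 := by
    rw [diagonal_conjTranspose, diagonal_mul_diagonal, ← diagonal_one]
    congr 1; ext i; fin_cases i <;> simp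
  have hU_ne : U ≠ 0 := fun h => by simp [h] at hU
  constructor
  · refine ciSup_eq_of_forall_le_of_apply_eq (fun X => ?_) ⟨U, hU_ne⟩ ?_
    · rw [h_ratio]
      exact div_le_one_of_le₀ (norm_phiCoeff_le_schatten_top X.1) (schatten_top_nonneg X.1)
    · rw [h_ratio, schatten_top_eq_one_of_conjTranspose_mul_self_eq_one hU,
        phiCoeff_diagonal_one_neg_I, norm_one, div_one]
  · refine ciSup_eq_of_forall_le_of_apply_eq (fun X => ?_) ⟨1, isHermitian_one, one_ne_zero⟩ ?_
    · rw [h_ratio]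
      exact div_le_of_le_mul₀ (schatten_top_nonneg X.1) (by positivity)
        (norm_phiCoeff_le_of_isHermitian X.2.1)
    · rw [h_ratio, schatten_top_eq_one_of_conjTranspose_mul_self_eq_one (by simp),
        norm_phiCoeff_one, div_one]

end SchattenNotes
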